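/- arXiv:1502.07095 — 2 statements merged into one kernel-verified Lean document; each statement's English description precedes it below -/
import Mathlib

section
/- With respect to the Fischer inner product on ℂ[x_1,...,x_n], if q is a homogeneous polynomial of degree m ≥ 1, then the polynomial ring decomposes as an orthogonal direct sum ℂ[x] = q·ℂ[x] ⊕ ker q*(∂_x); equivalently, every polynomial p can be written uniquely as p = q·p_1 + h with q*(∂_x)h = 0. -/
open MvPolynomial

/-- `∂_{x_i}` on `ℂ[x_1,…,x_n]`. -/
noncomputable def opD (n : ℕ) (i : Fin n) : Module.End ℂ (MvPolynomial (Fin n) ℂ) :=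
  (pderiv i).toLinearMap

/-- The monomial differential operator `∂^m = ∂_{x_1}^{m_1} ⋯ ∂_{x_n}^{m_n}`. -/
noncomputable def monOp (n : ℕ) (m : Fin n →₀ ℕ) : Module.End ℂ (MvPolynomial (Fin n) ℂ) :=
  ((List.finRange n).map fun i => opD n i ^ m i).prod

/-- The constant-coefficient differential operator `p(∂_x)` associated to a polynomial `p`. -/
noncomputable def diffOp (n : ℕ) (p : MvPolynomial (Fin n) ℂ) :
    Module.End ℂ (MvPolynomial (Fin n) ℂ) :=
  ∑ m ∈ p.support, p.coeff m • monOp n m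

/-- `p*`, the polynomial with complex-conjugated coefficients. -/
noncomputable def pstar (n : ℕ) (p : MvPolynomial (Fin n) ℂ) : MvPolynomial (Fin n) ℂ :=
  MvPolynomial.map (starRingEnd ℂ) p

/-- The Fischer inner product `⟨p, q⟩ = (p*(∂_x) q)(0)`. -/
noncomputable def fischer (n : ℕ) (p q : MvPolynomial (Fin n) ℂ) : ℂ :=
  constantCoeff (diffOp n (pstar n p) q)

/-!
Multiplication by `q` and the operator `q*(∂_x)` are adjoint for the Fischer inner product, which
is positive definite since `⟨p, p⟩ = ∑ α! |p_α|²`. Hence `q*(∂_x) (q a) = 0` forces `q a = 0`, so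
`a ↦ q*(∂_x) (q a)` is injective. For `q` homogeneous this map preserves the finite-dimensional
space of polynomials of total degree `≤ N`, so it is also surjective there: solving
`q*(∂_x) (q p₁) = q*(∂_x) p` gives the decomposition `p = q p₁ + (p - q p₁)`, and uniqueness and
orthogonality follow from adjointness again.
-/

section Operators

variable {n : ℕ}

lemma opD_pow_monomial (i : Fin n) (k : ℕ) (s : Fin n →₀ ℕ) (c : ℂ) :
    (opD n i ^ k) (monomial s c) =
      ((s i).descFactorial k : ℂ) • monomial (s - Finsupp.single i k) c := by
  induction k with
  | zero => simp
  | succ k ih =>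
    rw [pow_succ', Module.End.mul_apply, ih, map_smul]
    change (((s i).descFactorial k : ℕ) : ℂ) • pderiv i _ = _
    have hsi : (s - Finsupp.single i k) i = s i - k := by simp [Finsupp.tsub_apply]
    rw [pderiv_monomial, hsi, tsub_tsub, ← Finsupp.single_add, Nat.descFactorial_succ,
      smul_monomial, smul_monomial, smul_eq_mul, smul_eq_mul, Nat.cast_mul]
    ring_nf

lemma list_prod_map_opD_pow_monomial (a b : Fin n →₀ ℕ) (c : ℂ) {l : List (Fin n)}
    (hl : l.Nodup) :
    (l.map fun i => opD n i ^ a i).prod (monomial b c) =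
      ((∏ i ∈ l.toFinset, (b i).descFactorial (a i) : ℕ) : ℂ) •
        monomial (b - ∑ i ∈ l.toFinset, Finsupp.single i (a i)) c := by
  induction l with
  | nil => simp
  | cons i t ih =>
    obtain ⟨hit, ht⟩ := List.nodup_cons.mp hl
    have hbi : (b - ∑ j ∈ t.toFinset, Finsupp.single j (a j)) i = b i := by
      have hi : (∑ j ∈ t.toFinset, Finsupp.single j (a j)) i = 0 := by
        rw [Finsupp.finsetSum_apply]
        exact Finset.sum_eq_zero fun j hj =>
          Finsupp.single_eq_of_ne (by rintro rfl; exact hit (List.mem_toFinset.mp hj))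
      rw [Finsupp.tsub_apply, hi, Nat.sub_zero]
    rw [List.map_cons, List.prod_cons, Module.End.mul_apply, ih ht, map_smul, opD_pow_monomial,
      hbi, smul_smul, tsub_tsub, List.toFinset_cons, Finset.prod_insert (by simpa using hit),
      Finset.sum_insert (by simpa using hit), add_comm (Finsupp.single i (a i)), Nat.cast_mul,
      mul_comm]

lemma monOp_monomial (a b : Fin n →₀ ℕ) (c : ℂ) :
    monOp n a (monomial b c) =
      ((∏ i, (b i).descFactorial (a i) : ℕ) : ℂ) • monomial (b - a) c := by
  rw [monOp, list_prod_map_opD_pow_monomial a b c (List.nodup_finRange n),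
    List.toFinset_finRange, Finsupp.univ_sum_single]

lemma monOp_add (a b : Fin n →₀ ℕ) : monOp n (a + b) = monOp n a * monOp n b := by
  refine MvPolynomial.linearMap_ext fun c => LinearMap.ext fun d => ?_
  simp only [LinearMap.comp_apply, Module.End.mul_apply, monOp_monomial, map_smul, smul_smul,
    tsub_tsub, add_comm b a, ← Nat.cast_mul, ← Finset.prod_mul_distrib]
  congr 3 with i
  rw [Finsupp.tsub_apply, Finsupp.add_apply, mul_comm,
    ← Nat.descFactorial_mul_descFactorial (Nat.le_add_left (b i) (a i)), Nat.add_sub_cancel]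

lemma diffOp_monomial (a : Fin n →₀ ℕ) (c : ℂ) : diffOp n (monomial a c) = c • monOp n a := by
  rcases eq_or_ne c 0 with rfl | hc
  · simp [diffOp]
  · rw [diffOp, support_monomial, if_neg hc, Finset.sum_singleton, coeff_monomial, if_pos rfl]

lemma diffOp_add (p q : MvPolynomial (Fin n) ℂ) :
    diffOp n (p + q) = diffOp n p + diffOp n q := by
  classical
  have hsum : ∀ r : MvPolynomial (Fin n) ℂ,
      diffOp n r = Finsupp.sum (AddMonoidAlgebra.coeff r) fun a c => c • monOp n a :=
    fun _ => rfl
  rw [hsum, hsum, hsum, AddMonoidAlgebra.coeff_add]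
  exact Finsupp.sum_add_index (by simp) fun _ _ _ _ => add_smul _ _ _

lemma diffOp_mul (p q : MvPolynomial (Fin n) ℂ) :
    diffOp n (p * q) = diffOp n p * diffOp n q := by
  induction p using MvPolynomial.induction_on' with
  | monomial a c =>
    induction q using MvPolynomial.induction_on' with
    | monomial b d =>
      rw [monomial_mul, diffOp_monomial, diffOp_monomial, diffOp_monomial, monOp_add,
        smul_mul_smul_comm]
    | add q r hq hr => rw [mul_add, diffOp_add, hq, hr, diffOp_add, mul_add]
  | add p r hp hr => rw [add_mul, diffOp_add, hp, hr, diffOp_add, add_mul]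

end Operators

section Fischer

variable {n : ℕ}

lemma support_pstar (p : MvPolynomial (Fin n) ℂ) : (pstar n p).support = p.support :=
  support_map_of_injective p (RingHom.injective _)

lemma coeff_pstar (p : MvPolynomial (Fin n) ℂ) (a : Fin n →₀ ℕ) :
    coeff a (pstar n p) = starRingEnd ℂ (coeff a p) :=
  coeff_map _ _ _

lemma constantCoeff_monOp (a : Fin n →₀ ℕ) (p : MvPolynomial (Fin n) ℂ) :
    constantCoeff (monOp n a p) = ((∏ i, (a i).factorial : ℕ) : ℂ) * coeff a p := by
  induction p using MvPolynomial.induction_on' with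
  | monomial b c =>
    rw [monOp_monomial, constantCoeff_smul, constantCoeff_monomial, coeff_monomial]
    by_cases hba : b = a
    · subst hba
      simp [Nat.descFactorial_self]
    · rw [if_neg hba, mul_zero]
      split_ifs with hsub
      · obtain ⟨i, hi⟩ : ∃ i, b i < a i := by
          by_contra! h
          exact hba (le_antisymm (tsub_eq_zero_iff_le.mp hsub) fun i => h i)
        rw [Finset.prod_eq_zero (Finset.mem_univ i) (Nat.descFactorial_eq_zero_iff_lt.mpr hi)]
        simp
      · simp
  | add p q hp hq => rw [map_add, map_add, hp, hq, coeff_add, mul_add]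

lemma fischer_eq_sum (p q : MvPolynomial (Fin n) ℂ) :
    fischer n p q = ∑ a ∈ p.support,
      starRingEnd ℂ (coeff a p) * (((∏ i, (a i).factorial : ℕ) : ℂ) * coeff a q) := by
  simp only [fischer, diffOp, support_pstar, coeff_pstar, LinearMap.sum_apply, map_sum,
    LinearMap.smul_apply, constantCoeff_smul, constantCoeff_monOp, smul_eq_mul]

lemma fischer_self (p : MvPolynomial (Fin n) ℂ) :
    fischer n p p = ((∑ a ∈ p.support,
      (∏ i, (a i).factorial : ℕ) * Complex.normSq (coeff a p) : ℝ) : ℂ) := by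
  rw [fischer_eq_sum]
  push_cast
  refine Finset.sum_congr rfl fun a _ => ?_
  rw [Complex.normSq_eq_conj_mul_self]
  ring

lemma eq_zero_of_fischer_self_eq_zero {p : MvPolynomial (Fin n) ℂ} (h : fischer n p p = 0) :
    p = 0 := by
  have hnonneg : ∀ a ∈ p.support,
      0 ≤ ((∏ i, (a i).factorial : ℕ) : ℝ) * Complex.normSq (coeff a p) :=
    fun _ _ => mul_nonneg (Nat.cast_nonneg _) (Complex.normSq_nonneg _)
  rw [fischer_self, Complex.ofReal_eq_zero, Finset.sum_eq_zero_iff_of_nonneg hnonneg] at h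
  by_contra hp
  obtain ⟨a, ha⟩ := exists_coeff_ne_zero hp
  exact (mul_pos (by positivity) (Complex.normSq_pos.mpr ha)).ne' (h a (mem_support_iff.mpr ha))

lemma fischer_zero_right (p : MvPolynomial (Fin n) ℂ) : fischer n p 0 = 0 := by
  rw [fischer, map_zero, map_zero]

lemma fischer_mul_left (q a h : MvPolynomial (Fin n) ℂ) :
    fischer n (q * a) h = fischer n a (diffOp n (pstar n q) h) := by
  rw [fischer, fischer, mul_comm q a, pstar, map_mul, ← pstar, ← pstar, diffOp_mul,
    Module.End.mul_apply]

end Fischer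

section Degree

variable {n : ℕ}

lemma totalDegree_monOp_monomial_le (a b : Fin n →₀ ℕ) (c : ℂ) :
    (monOp n a (monomial b c)).totalDegree ≤ b.degree - a.degree := by
  rw [monOp_monomial]
  by_cases hab : a ≤ b
  · have hdeg : (b - a).degree = b.degree - a.degree := by
      rw [eq_tsub_iff_add_eq_of_le (Finsupp.degree_mono hab), ← map_add,
        tsub_add_cancel_of_le hab]
    exact (totalDegree_smul_le _ _).trans ((totalDegree_monomial_le _ _).trans hdeg.le)
  · obtain ⟨i, hi⟩ : ∃ i, b i < a i := by
      by_contra! h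
      exact hab fun i => h i
    rw [Finset.prod_eq_zero (Finset.mem_univ i) (Nat.descFactorial_eq_zero_iff_lt.mpr hi)]
    simp

lemma totalDegree_monOp_le (a : Fin n →₀ ℕ) (f : MvPolynomial (Fin n) ℂ) :
    (monOp n a f).totalDegree ≤ f.totalDegree - a.degree := by
  conv_lhs => rw [f.as_sum, map_sum]
  refine (totalDegree_finsetSum _ _).trans (Finset.sup_le fun b hb => ?_)
  exact (totalDegree_monOp_monomial_le a b _).trans (Nat.sub_le_sub_right (le_totalDegree hb) _)

lemma totalDegree_diffOp_pstar_le {m : ℕ} {q : MvPolynomial (Fin n) ℂ} (hq : q.IsHomogeneous m)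
    (f : MvPolynomial (Fin n) ℂ) :
    (diffOp n (pstar n q) f).totalDegree ≤ f.totalDegree - m := by
  rw [diffOp, support_pstar, LinearMap.sum_apply]
  refine (totalDegree_finsetSum _ _).trans (Finset.sup_le fun a ha => ?_)
  have hdeg : a.degree = m := (hq.degree_eq_sum_deg_support ha).symm
  exact (totalDegree_smul_le _ _).trans (hdeg ▸ totalDegree_monOp_le a f)

end Degree

section Decomposition

variable {n : ℕ}

lemma mul_eq_zero_of_diffOp_pstar_mul_eq_zero {q a : MvPolynomial (Fin n) ℂ}
    (h : diffOp n (pstar n q) (q * a) = 0) : q * a = 0 :=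
  eq_zero_of_fischer_self_eq_zero (by rw [fischer_mul_left, h, fischer_zero_right])

lemma exists_diffOp_pstar_mul_eq {m : ℕ} {q : MvPolynomial (Fin n) ℂ} (hq : q.IsHomogeneous m)
    (p : MvPolynomial (Fin n) ℂ) :
    ∃ a, diffOp n (pstar n q) (q * a) = diffOp n (pstar n q) p := by
  rcases eq_or_ne q 0 with rfl | hq0
  · exact ⟨0, by simp [pstar, diffOp]⟩
  let V := restrictTotalDegree (Fin n) ℂ p.totalDegree
  have hdeg : ∀ f, (diffOp n (pstar n q) f).totalDegree ≤ f.totalDegree - m :=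
    totalDegree_diffOp_pstar_le hq
  have hmaps : ∀ a ∈ V, (diffOp n (pstar n q) ∘ₗ LinearMap.mulLeft ℂ q) a ∈ V := by
    intro a ha
    rw [mem_restrictTotalDegree] at ha ⊢
    have hdeg_qa := (hdeg (q * a)).trans (Nat.sub_le_sub_right (totalDegree_mul q a) m)
    have hq_le := hq.totalDegree_le
    simp only [LinearMap.comp_apply, LinearMap.mulLeft_apply]
    omega
  let T : V →ₗ[ℂ] V := (diffOp n (pstar n q) ∘ₗ LinearMap.mulLeft ℂ q).restrict hmaps
  have hT : Function.Injective T := by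
    refine (injective_iff_map_eq_zero T).mpr fun a ha => ?_
    have hqa := mul_eq_zero_of_diffOp_pstar_mul_eq_zero (congrArg Subtype.val ha)
    exact Subtype.ext ((mul_eq_zero.mp hqa).resolve_left hq0)
  have hp : diffOp n (pstar n q) p ∈ V :=
    (mem_restrictTotalDegree _ _ _).mpr ((hdeg p).trans (Nat.sub_le _ _))
  obtain ⟨a, ha⟩ := LinearMap.injective_iff_surjective.mp hT ⟨_, hp⟩
  exact ⟨a, congrArg Subtype.val ha⟩

end Decomposition

theorem fischer_pair_decomposition_general (n : ℕ) (m : ℕ)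
    (q : MvPolynomial (Fin n) ℂ) (hq : q.IsHomogeneous m) :
    (∀ p : MvPolynomial (Fin n) ℂ,
      ∃ p₁ h : MvPolynomial (Fin n) ℂ,
        diffOp n (pstar n q) h = 0 ∧ p = q * p₁ + h ∧
        ∀ p₁' h' : MvPolynomial (Fin n) ℂ,
          diffOp n (pstar n q) h' = 0 → p = q * p₁' + h' → q * p₁' = q * p₁ ∧ h' = h) ∧
    (∀ p₁ h : MvPolynomial (Fin n) ℂ,
      diffOp n (pstar n q) h = 0 → fischer n (q * p₁) h = 0) := by
  refine ⟨fun p => ?_, fun p₁ h hh => by rw [fischer_mul_left, hh, fischer_zero_right]⟩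
  obtain ⟨p₁, hp₁⟩ := exists_diffOp_pstar_mul_eq hq p
  refine ⟨p₁, p - q * p₁, by rw [map_sub, hp₁, sub_self], by ring, fun p₁' h' hh' hp => ?_⟩
  have hdiff : q * (p₁' - p₁) = (p - q * p₁) - h' := by rw [hp]; ring
  have hzero : q * (p₁' - p₁) = 0 := by
    refine mul_eq_zero_of_diffOp_pstar_mul_eq_zero ?_
    rw [hdiff, map_sub, map_sub, hp₁, hh', sub_self, sub_zero]
  rw [mul_sub, sub_eq_zero] at hzero
  exact ⟨hzero, by rw [hp, hzero]; ring⟩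

/-- Fischer decomposition: for a homogeneous polynomial `q` of degree `m ≥ 1`,
`ℂ[x] = q·ℂ[x] ⊕ ker q*(∂_x)` orthogonally; equivalently every polynomial `p` can be
written as `p = q·p₁ + h` with `q*(∂_x) h = 0`, the two summands `q·p₁` and `h` being
unique, and the summands are orthogonal for the Fischer inner product. -/
theorem fischer_pair_decomposition (n : ℕ) (m : ℕ) (hm : 1 ≤ m)
    (q : MvPolynomial (Fin n) ℂ) (hq : q.IsHomogeneous m) :
    (∀ p : MvPolynomial (Fin n) ℂ,
      ∃ p₁ h : MvPolynomial (Fin n) ℂ,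
        diffOp n (pstar n q) h = 0 ∧ p = q * p₁ + h ∧
        ∀ p₁' h' : MvPolynomial (Fin n) ℂ,
          diffOp n (pstar n q) h' = 0 → p = q * p₁' + h' → q * p₁' = q * p₁ ∧ h' = h) ∧
    (∀ p₁ h : MvPolynomial (Fin n) ℂ,
      diffOp n (pstar n q) h = 0 → fischer n (q * p₁) h = 0) :=
  fischer_pair_decomposition_general n m q hq
end

section
/- Let ℂ[x,y] = ℂ[x_1,...,x_n,y_1,...,y_n], q = Σ_{i=1}^n x_i y_i, and □ = Σ_{i=1}^n ∂_{x_i}∂_{y_i}. Denote by H = ker □ the space of harmonic polynomials. Then the multiplication map ℂ[q] ⊗ H → ℂ[x,y] is a linear isomorphism, i.e., every polynomial p ∈ ℂ[x,y] can be written uniquely as p = Σ_{k≥0} q^k h_k with h_k ∈ H (Fischer decomposition for sl(n,ℂ)). -/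
open MvPolynomial

/-- Polynomial algebra in `x_1,…,x_n, y_1,…,y_n`. -/
abbrev PolyXY (n : ℕ) : Type := MvPolynomial (Fin n ⊕ Fin n) ℂ

/-- Multiplication by `x_i`. -/
noncomputable def opX (n : ℕ) (i : Fin n) : Module.End ℂ (PolyXY n) :=
  LinearMap.mulLeft ℂ (X (Sum.inl i))

/-- Multiplication by `y_i`. -/
noncomputable def opY (n : ℕ) (i : Fin n) : Module.End ℂ (PolyXY n) :=
  LinearMap.mulLeft ℂ (X (Sum.inr i))

/-- `∂_{x_i}`. -/
noncomputable def opDx (n : ℕ) (i : Fin n) : Module.End ℂ (PolyXY n) :=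
  (pderiv (Sum.inl i)).toLinearMap

/-- `∂_{y_i}`. -/
noncomputable def opDy (n : ℕ) (i : Fin n) : Module.End ℂ (PolyXY n) :=
  (pderiv (Sum.inr i)).toLinearMap

/-- `□ = Σ ∂_{x_i} ∂_{y_i}`. -/
noncomputable def opBox (n : ℕ) : Module.End ℂ (PolyXY n) :=
  ∑ i, opDx n i * opDy n i

/-- `E_x = Σ x_i ∂_{x_i}`. -/
noncomputable def opEx (n : ℕ) : Module.End ℂ (PolyXY n) :=
  ∑ i, opX n i * opDx n i

/-- `E_y = Σ y_i ∂_{y_i}`. -/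
noncomputable def opEy (n : ℕ) : Module.End ℂ (PolyXY n) :=
  ∑ i, opY n i * opDy n i

/-- The invariant quadratic polynomial `q = Σ x_i y_i`. -/
noncomputable def polyQ (n : ℕ) : PolyXY n :=
  ∑ i, X (Sum.inl i) * X (Sum.inr i)

/-- The action `π(A) = Σ_{i,j} a_{ij} (x_i ∂_{x_j} − y_j ∂_{y_i})` of a matrix `A`. -/
noncomputable def opPi (n : ℕ) (A : Matrix (Fin n) (Fin n) ℂ) : Module.End ℂ (PolyXY n) :=
  ∑ i, ∑ j, A i j • (opX n i * opDx n j - opY n j * opDy n i)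


/-!
Let `E = Σ_v X_v ∂_v` be the Euler operator; it multiplies a monomial by its total degree, so
`E + c` is bijective for every positive integer `c`. Two commutation rules drive the argument:
`□ (E + c) = (E + c + 2) □` and `□ (q p) = q □ p + E p + n p`. The first shows that `E + c`
restricts to a bijection of harmonic polynomials; iterating the second gives, for harmonic `h`,
`□ (q^(k+1) h) = q^k (k + 1) (E + n + k) h`.

Existence is by induction on the degree: write `□ p = Σ q^k g_k` with `g_k` harmonic, solve
`□ (q^(k+1) f_k) = q^k g_k` with `f_k` harmonic by inverting `E + n + k`, and observe that
`p - Σ q^(k+1) f_k` is harmonic. Uniqueness: applying `□` to a vanishing sum `Σ q^k h_k` gives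
the shorter vanishing sum with coefficients `(k + 1) (E + n + k) h_(k+1)`, so by induction every
`h_(k+1)` vanishes, and then so does `h_0`.
-/

namespace MvPolynomial

variable {σ R : Type*} [CommSemiring R]

lemma totalDegree_pderiv_le (i : σ) (p : MvPolynomial σ R) :
    (pderiv i p).totalDegree ≤ p.totalDegree - 1 := by
  refine Finset.sup_le fun m hm => ?_
  have hcoeff : coeff (m + Finsupp.single i 1) p ≠ 0 := by
    rw [mem_support_iff, coeff_pderiv] at hm
    exact left_ne_zero_of_mul hm
  have := le_totalDegree (mem_support_iff.2 hcoeff)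
  rw [Finsupp.sum_add_index' (fun _ => rfl) (fun _ _ _ => rfl), Finsupp.sum_single_index rfl]
    at this
  omega

variable [Fintype σ]

noncomputable def euler : Derivation R (MvPolynomial σ R) (MvPolynomial σ R) :=
  ∑ i : σ, (X i : MvPolynomial σ R) • pderiv i

lemma euler_apply (p : MvPolynomial σ R) : euler p = ∑ i, X i * pderiv i p := by
  rw [euler, ← Derivation.coeFnAddMonoidHom_apply, map_sum, Finset.sum_apply]
  rfl

lemma euler_of_isHomogeneous {p : MvPolynomial σ R} {d : ℕ} (hp : p.IsHomogeneous d) :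
    euler p = d • p := by
  rw [euler_apply, hp.sum_X_mul_pderiv]

lemma coeff_euler (m : σ →₀ ℕ) (p : MvPolynomial σ R) :
    coeff m (euler p) = m.degree • coeff m p := by
  classical
  induction p using MvPolynomial.induction_on' with
  | monomial m' r =>
    rw [euler_of_isHomogeneous (isHomogeneous_monomial r rfl), coeff_smul, coeff_monomial]
    split_ifs with h <;> simp [h]
  | add p q hp hq => simp only [map_add, coeff_add, hp, hq, smul_add]

lemma pderiv_euler (i : σ) (p : MvPolynomial σ R) :
    pderiv i (euler p) = euler (pderiv i p) + pderiv i p := by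
  ext m
  simp only [coeff_add, coeff_pderiv, coeff_euler, map_add, Finsupp.degree_single, nsmul_eq_mul]
  push_cast
  ring

lemma bijective_euler_add_nsmul {K : Type*} [Field K] [CharZero K] {c : ℕ} (hc : c ≠ 0) :
    Function.Bijective fun p : MvPolynomial σ K => euler p + c • p := by
  have hne (m : σ →₀ ℕ) : ((m.degree + c : ℕ) : K) ≠ 0 := Nat.cast_ne_zero.2 (by omega)
  have coeff_eq (m : σ →₀ ℕ) (p : MvPolynomial σ K) :
      coeff m (euler p + c • p) = ((m.degree + c : ℕ) : K) * coeff m p := by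
    rw [coeff_add, coeff_euler, coeff_smul, ← add_smul, nsmul_eq_mul]
  refine ⟨fun p p' h => ?_, fun g => ?_⟩
  · ext m
    have := congrArg (coeff m) h
    rwa [coeff_eq, coeff_eq, mul_right_inj' (hne m)] at this
  · classical
    refine ⟨∑ m ∈ g.support, monomial m (((m.degree + c : ℕ) : K)⁻¹ * coeff m g), ?_⟩
    ext m
    rw [coeff_eq, coeff_sum]
    simp only [coeff_monomial, Finset.sum_ite_eq', mem_support_iff]
    split_ifs with h
    · rw [← mul_assoc, mul_inv_cancel₀ (hne m), one_mul]
    · rw [mul_zero, not_not.1 h]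

end MvPolynomial

section

variable {n : ℕ}

lemma opBox_apply (p : PolyXY n) :
    opBox n p = ∑ i, pderiv (Sum.inl i) (pderiv (Sum.inr i) p) := by
  simp [opBox, opDx, opDy, LinearMap.sum_apply, Module.End.mul_apply]

lemma opBox_euler (p : PolyXY n) :
    opBox n (euler p) = euler (opBox n p) + 2 • opBox n p := by
  simp only [opBox_apply, pderiv_euler, map_add, map_sum, Finset.sum_add_distrib]
  abel

lemma totalDegree_opBox_lt {p : PolyXY n} (hp : opBox n p ≠ 0) :
    (opBox n p).totalDegree < p.totalDegree := by
  have hle : (opBox n p).totalDegree ≤ p.totalDegree - 2 := by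
    rw [opBox_apply]
    refine (totalDegree_finsetSum _ _).trans (Finset.sup_le fun i _ => ?_)
    refine (totalDegree_pderiv_le _ _).trans ?_
    have := totalDegree_pderiv_le (Sum.inr i) p
    omega
  have hpos : p.totalDegree ≠ 0 := by
    intro h0
    rw [totalDegree_eq_zero_iff_eq_C.1 h0] at hp
    simp [opBox_apply] at hp
  omega

lemma isHomogeneous_polyQ : (polyQ n).IsHomogeneous 2 :=
  IsHomogeneous.sum _ _ _ fun _ _ => (isHomogeneous_X _ _).mul (isHomogeneous_X _ _)

lemma pderiv_inl_polyQ (i : Fin n) : pderiv (Sum.inl i) (polyQ n) = X (Sum.inr i) := by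
  classical
  simp [polyQ, pderiv_X, Pi.single_apply]

lemma pderiv_inr_polyQ (i : Fin n) : pderiv (Sum.inr i) (polyQ n) = X (Sum.inl i) := by
  classical
  simp [polyQ, pderiv_X, Pi.single_apply]

lemma opBox_polyQ_mul (p : PolyXY n) :
    opBox n (polyQ n * p) = polyQ n * opBox n p + euler p + n • p := by
  have hterm (i : Fin n) : pderiv (Sum.inl i) (pderiv (Sum.inr i) (polyQ n * p)) =
      polyQ n * pderiv (Sum.inl i) (pderiv (Sum.inr i) p) + X (Sum.inl i) * pderiv (Sum.inl i) p
        + X (Sum.inr i) * pderiv (Sum.inr i) p + p := by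
    simp only [pderiv_mul, pderiv_inl_polyQ, pderiv_inr_polyQ, map_add, pderiv_X_self]
    ring
  simp only [opBox_apply, hterm, Finset.sum_add_distrib, euler_apply, Fintype.sum_sum_type,
    Finset.mul_sum, Finset.sum_const, Finset.card_univ, Fintype.card_fin]
  abel

lemma euler_polyQ_pow_mul (k : ℕ) (p : PolyXY n) :
    euler (polyQ n ^ k * p) = polyQ n ^ k * euler p + (2 * k) • (polyQ n ^ k * p) := by
  rw [Derivation.leibniz, euler_of_isHomogeneous (isHomogeneous_polyQ.pow k), smul_eq_mul,
    smul_eq_mul, mul_smul_comm, mul_comm p, mul_comm 2 k]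

lemma opBox_polyQ_pow_succ_mul {h : PolyXY n} (hh : opBox n h = 0) (k : ℕ) :
    opBox n (polyQ n ^ (k + 1) * h) = polyQ n ^ k * ((k + 1) • (euler h + (n + k) • h)) := by
  induction k with
  | zero => simp [opBox_polyQ_mul, hh]
  | succ k ih =>
    rw [pow_succ', mul_assoc, opBox_polyQ_mul, ih, euler_polyQ_pow_mul]
    simp only [nsmul_eq_mul]
    push_cast
    ring

lemma opBox_euler_add_nsmul (c : ℕ) (p : PolyXY n) :
    opBox n (euler p + c • p) = euler (opBox n p) + (c + 2) • opBox n p := by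
  rw [map_add, map_nsmul, opBox_euler, add_nsmul]
  abel

lemma exists_harmonic_opBox_polyQ_pow_succ_mul_eq (hn : 0 < n) {g : PolyXY n}
    (hg : opBox n g = 0) (k : ℕ) :
    ∃ f, opBox n f = 0 ∧ opBox n (polyQ n ^ (k + 1) * f) = polyQ n ^ k * g := by
  obtain ⟨f, hf⟩ :=
    (bijective_euler_add_nsmul (σ := Fin n ⊕ Fin n) (c := n + k) (by omega)).2
      (((k + 1 : ℕ) : ℂ)⁻¹ • g)
  dsimp only at hf
  have hf_harmonic : opBox n f = 0 := by
    refine (bijective_euler_add_nsmul (c := n + k + 2) (by omega)).1 ?_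
    simp only [← opBox_euler_add_nsmul, hf, map_smul, hg, smul_zero, map_zero, add_zero]
  refine ⟨f, hf_harmonic, ?_⟩
  rw [opBox_polyQ_pow_succ_mul hf_harmonic, hf, ← Nat.cast_smul_eq_nsmul ℂ, smul_smul,
    mul_inv_cancel₀ (Nat.cast_ne_zero.2 k.succ_ne_zero), one_smul]

lemma exists_harmonic_expansion (hn : 0 < n) (p : PolyXY n) :
    ∃ (N : ℕ) (h : ℕ → PolyXY n),
      (∀ k, opBox n (h k) = 0) ∧ p = ∑ k ∈ Finset.range N, polyQ n ^ k * h k := by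
  induction hd : p.totalDegree using Nat.strong_induction_on generalizing p with
  | _ d ih =>
    by_cases hp : opBox n p = 0
    · exact ⟨1, fun _ => p, fun _ => hp, by simp⟩
    obtain ⟨N, g, hg, hsum⟩ := ih _ (hd ▸ totalDegree_opBox_lt hp) (opBox n p) rfl
    choose f hf hfg using fun k => exists_harmonic_opBox_polyQ_pow_succ_mul_eq hn (hg k) k
    set r := p - ∑ k ∈ Finset.range N, polyQ n ^ (k + 1) * f k with hr_def
    have hr : opBox n r = 0 := by
      rw [hr_def, map_sub, map_sum, hsum]
      simp only [hfg, sub_self]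
    refine ⟨N + 1, fun | 0 => r | k + 1 => f k, ?_, ?_⟩
    · rintro (_ | k)
      exacts [hr, hf k]
    · rw [Finset.sum_range_succ', pow_zero, one_mul, hr_def, add_sub_cancel]

lemma eq_zero_of_sum_polyQ_pow_mul_eq_zero (hn : 0 < n) (N : ℕ) {h : ℕ → PolyXY n}
    (hh : ∀ k, opBox n (h k) = 0) (hsum : ∑ k ∈ Finset.range N, polyQ n ^ k * h k = 0) :
    ∀ k < N, h k = 0 := by
  induction N generalizing h with
  | zero => intro k hk; omega
  | succ N ih =>
    have hbox : ∑ k ∈ Finset.range N,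
        polyQ n ^ k * ((k + 1) • (euler (h (k + 1)) + (n + k) • h (k + 1))) = 0 := by
      have := congrArg (opBox n) hsum
      rwa [map_sum, Finset.sum_range_succ', pow_zero, one_mul, hh 0, add_zero, map_zero,
        Finset.sum_congr rfl fun k _ => opBox_polyQ_pow_succ_mul (hh (k + 1)) k] at this
    have hsucc (k : ℕ) (hk : k < N) : h (k + 1) = 0 := by
      have := ih (fun k => by
        simp only [map_nsmul, opBox_euler_add_nsmul, hh, map_zero, smul_zero, add_zero]) hbox k hk
      refine (bijective_euler_add_nsmul (c := n + k) (by omega)).1 ?_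
      simpa only [map_zero, smul_zero, add_zero] using
        (smul_eq_zero.1 this).resolve_left k.succ_ne_zero
    have h0 : h 0 = 0 := by
      rwa [Finset.sum_range_succ', Finset.sum_eq_zero fun k hk => by
        rw [hsucc k (Finset.mem_range.1 hk), mul_zero], zero_add, pow_zero, one_mul] at hsum
    rintro (_ | k) hk
    exacts [h0, hsucc k (by omega)]

lemma finsupp_sum_polyQ_pow_mul_of_support_subset {h : ℕ →₀ PolyXY n} {N : ℕ}
    (hN : h.support ⊆ Finset.range N) :
    (h.sum fun k hk => polyQ n ^ k * hk) = ∑ k ∈ Finset.range N, polyQ n ^ k * h k :=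
  Finsupp.sum_of_support_subset h hN _ fun _ _ => mul_zero _

lemma exists_harmonic_finsupp_expansion (hn : 0 < n) (p : PolyXY n) :
    ∃ h : ℕ →₀ PolyXY n,
      (∀ k, opBox n (h k) = 0) ∧ p = h.sum fun k hk => polyQ n ^ k * hk := by
  classical
  obtain ⟨N, h, hh, rfl⟩ := exists_harmonic_expansion hn p
  have hH (k : ℕ) : Finsupp.indicator (Finset.range N) (fun k _ => h k) k =
      if k ∈ Finset.range N then h k else 0 := by
    rw [Finsupp.indicator_apply, dite_eq_ite]
  refine ⟨Finsupp.indicator (Finset.range N) fun k _ => h k, fun k => ?_, ?_⟩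
  · rw [hH]
    split_ifs
    exacts [hh k, map_zero _]
  · rw [finsupp_sum_polyQ_pow_mul_of_support_subset (Finsupp.support_indicator_subset _ _)]
    exact Finset.sum_congr rfl fun k hk => by rw [hH, if_pos hk]

lemma eq_zero_of_harmonic_finsupp_sum_eq_zero (hn : 0 < n) {h : ℕ →₀ PolyXY n}
    (hh : ∀ k, opBox n (h k) = 0) (hsum : (h.sum fun k hk => polyQ n ^ k * hk) = 0) : h = 0 := by
  obtain ⟨N, hN⟩ := h.support.exists_nat_subset_range
  rw [finsupp_sum_polyQ_pow_mul_of_support_subset hN] at hsum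
  refine Finsupp.ext fun k => ?_
  by_cases hk : k < N
  · exact eq_zero_of_sum_polyQ_pow_mul_eq_zero hn N hh hsum k hk
  · exact Finsupp.notMem_support_iff.1 fun hmem => hk (Finset.mem_range.1 (hN hmem))

end

/-- Fischer decomposition for `sl(n,ℂ)`:
every polynomial `p ∈ ℂ[x,y]` is uniquely `p = Σ_k q^k h_k` with each `h_k` harmonic. -/
theorem fischer_decomposition_sl (n : ℕ) (hn : 2 ≤ n) (p : PolyXY n) :
    ∃! h : ℕ →₀ PolyXY n,
      (∀ k : ℕ, opBox n (h k) = 0) ∧ p = h.sum fun k hk => polyQ n ^ k * hk := by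
  obtain ⟨h, hh, hp⟩ := exists_harmonic_finsupp_expansion (by omega) p
  refine ⟨h, ⟨hh, hp⟩, fun h' ⟨hh', hp'⟩ => sub_eq_zero.1 ?_⟩
  refine eq_zero_of_harmonic_finsupp_sum_eq_zero (by omega) (fun k => ?_) ?_
  · rw [Finsupp.sub_apply, map_sub, hh, hh', sub_zero]
  · rw [Finsupp.sum_sub_index fun _ => mul_sub _, ← hp, ← hp', sub_self]
end
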